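/- Let G = (V,E) be a locally finite graph and q : V → ℝ a potential of class K_{0⁺}. Then the following are equivalent: (i) (G,q) is almost sparse; (ii) for every ε > 0 there is k_ε ≥ 0 such that for all finitely supported f : V → ℂ, (1−ε)(Q_deg(f) + Q_q(f)) − k_ε·‖f‖² ≤ Q_Δ(f) + Q_q(f) ≤ (1+ε)(Q_deg(f) + Q_q(f)) + k_ε·‖f‖²; (iii) for every ε > 0 there is k_ε ≥ 0 such that for all finitely supported f : V → ℂ, (1−ε)(Q_deg(f) + Q_q(f)) − k_ε·‖f‖² ≤ Q_Δ(f) + Q_q(f). -/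

import Mathlib

open scoped BigOperators

noncomputable section

variable {V : Type*} [DecidableEq V] (G : SimpleGraph V) [DecidableRel G.Adj]

/-- The squared `ℓ²`-norm `‖f‖² = ∑_x |f x|²` of a (finitely supported) function. -/
def qNormSq (f : V → ℂ) : ℝ := ∑' x, ‖f x‖ ^ 2

/-- The quadratic form of the Laplacian:
`Q_Δ(f) = (1/2) ∑_{x ~ y} |f x - f y|²` (sum over ordered pairs of adjacent vertices). -/
def qLap (f : V → ℂ) : ℝ :=
  (1 / 2) * ∑' (x : V), ∑' (y : V), if G.Adj x y then ‖f x - f y‖ ^ 2 else 0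

/-- The magnetic quadratic form
`Q_θ(f) = (1/2) ∑_{x ~ y} |f x - e^{iθ(x,y)} f y|²`. -/
def qMag (θ : V → V → ℝ) (f : V → ℂ) : ℝ :=
  (1 / 2) * ∑' (x : V), ∑' (y : V),
    if G.Adj x y then ‖f x - Complex.exp (Complex.I * (θ x y)) * f y‖ ^ 2 else 0

/-- The quadratic form of a potential: `Q_q(f) = ∑_x q x * |f x|²`. -/
def qPot (q : V → ℝ) (f : V → ℂ) : ℝ := ∑' x, q x * ‖f x‖ ^ 2

variable [G.LocallyFinite]

/-- The quadratic form of the degree: `Q_deg(f) = ∑_x deg x * |f x|²`. -/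
def qDeg (f : V → ℂ) : ℝ := ∑' x, (G.degree x : ℝ) * ‖f x‖ ^ 2

/-- Twice the number of undirected edges of the subgraph induced on `W`,
i.e. the number of ordered pairs of adjacent vertices in `W × W`. -/
def edgesTwice (W : Finset V) : ℕ := ((W ×ˢ W).filter fun p => G.Adj p.1 p.2).card

/-- The cardinality `|∂W|` of the edge boundary of `W`. -/
def bdryCard (W : Finset V) : ℕ :=
  ∑ x ∈ W, ((G.neighborFinset x).filter fun y => y ∉ W).card

/-- `(G, q)` is `(a,k)`-sparse: `2|E_W| ≤ k|W| + a(|∂W| + q₊(W))` for all finite `W`. -/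
def IsSparse (q : V → ℝ) (a k : ℝ) : Prop :=
  ∀ W : Finset V,
    (edgesTwice G W : ℝ) ≤ k * W.card + a * ((bdryCard G W : ℝ) + ∑ x ∈ W, max (q x) 0)

/-- The potential `q` belongs to the class `K_α`:
`Q_{q₋}(f) ≤ α (Q_Δ(f) + Q_{q₊}(f)) + C ‖f‖²` for all finitely supported `f`. -/
def KClass (q : V → ℝ) (α : ℝ) : Prop :=
  ∃ C : ℝ, 0 ≤ C ∧ ∀ f : V → ℂ, (Function.support f).Finite →
    qPot (fun x => max (-q x) 0) f ≤
      α * (qLap G f + qPot (fun x => max (q x) 0) f) + C * qNormSq f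

/-- The potential `q` belongs to the magnetic class `K_α^θ`:
`Q_{q₋}(f) ≤ α (Q_θ(f) + Q_{q₊}(f)) + C ‖f‖²` for all finitely supported `f`. -/
def KClassTheta (θ : V → V → ℝ) (q : V → ℝ) (α : ℝ) : Prop :=
  ∃ C : ℝ, 0 ≤ C ∧ ∀ f : V → ℂ, (Function.support f).Finite →
    qPot (fun x => max (-q x) 0) f ≤
      α * (qMag G θ f + qPot (fun x => max (q x) 0) f) + C * qNormSq f

/-- The Cheeger (isoperimetric) constant of `U ⊆ V`:
the infimum over nonempty finite `W ⊆ U` of `(|∂W| + q(W)) / (deg(W) + q(W))`,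
with the convention that the quotient is `0` when the denominator vanishes. -/
def cheeger (q : V → ℝ) (U : Set V) : ℝ :=
  ⨅ W : {W : Finset V // ↑W ⊆ U ∧ W.Nonempty},
    if (∑ x ∈ W.1, ((G.degree x : ℝ) + q x)) = 0 then 0
    else ((bdryCard G W.1 : ℝ) + ∑ x ∈ W.1, q x) / ∑ x ∈ W.1, ((G.degree x : ℝ) + q x)

/-- The Cheeger constant at infinity: `α_∞ = sup over finite K of α_{V∖K}`. -/
def cheegerInfty (q : V → ℝ) : ℝ :=
  ⨆ K : Finset V, cheeger G q ((↑K : Set V)ᶜ)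

end

/-!
(iii) ⇒ (i): the lower bound applied to the indicator `1_W` reads
`(1 - ε) (deg(W) + q(W)) - k |W| ≤ |∂W| + q(W)`, and `deg(W) = 2|E_W| + |∂W|`.

(i) ⇒ (ii): `(a,k)`-sparseness is exactly the inequality
`∑ (deg + q₊) F ≤ k ∑ F + (1 + a) (½ ∑_{x ~ y} |F x - F y| + ∑ q₊ F)` for indicators `F = 1_W`;
writing a nonnegative `F` as a positive combination of indicators of its nested level sets
extends it to all `F ≥ 0`. For `F = |f|²` one has `|F x - F y| = ||f x| - |f y|| (|f x| + |f y|)`,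
and AM-GM with weight `1 + δ` (taking `a = δ²`) shows that `Q_deg(f) - Q_Δ(|f|)` is at most
`9δ (Q_deg(f) + Q_{q₊}(f)) + (3k/δ) ‖f‖²`. Since `Q_Δ(|f|) ≤ Q_Δ(f) ≤ 2 Q_deg(f) - Q_Δ(|f|)`,
the same bound holds for `|Q_Δ(f) - Q_deg(f)|`, and `q ∈ K_{0⁺}` absorbs the negative part `q₋`.
-/

open Finset

theorem two_mul_abs_sq_sub_sq_le {a b : ℝ} (ha : 0 ≤ a) (hb : 0 ≤ b) (t : ℝ) :
    2 * t * |a ^ 2 - b ^ 2| ≤ t ^ 2 * (a - b) ^ 2 + (a + b) ^ 2 := by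
  have h : |a ^ 2 - b ^ 2| = |a - b| * (a + b) := by
    rw [show a ^ 2 - b ^ 2 = (a - b) * (a + b) by ring, abs_mul, abs_of_nonneg (add_nonneg ha hb)]
  rw [h, ← sq_abs (a - b)]
  nlinarith [sq_nonneg (t * |a - b| - (a + b))]

section LevelSets

variable {α : Type*}

theorem abs_add_mul_indicator_sub {W : Finset α} {F : α → ℝ} (hF : ∀ x, 0 ≤ F x)
    (hFW : ∀ x ∉ W, F x = 0) {m : ℝ} (hm : 0 ≤ m) (x y : α) :
    |F x + m * (W : Set α).indicator 1 x - (F y + m * (W : Set α).indicator 1 y)| =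
      |F x - F y| + m * |(W : Set α).indicator 1 x - (W : Set α).indicator (1 : α → ℝ) y| := by
  have hFx := hF x
  have hFy := hF y
  by_cases hx : x ∈ W <;> by_cases hy : y ∈ W <;>
    simp [hx, hy, hFW, abs_of_nonneg, hFx, hFy, hm, add_nonneg, add_comm, - neg_add_rev]

/-- Peel off the minimum of `F` on its support: this removes at least one point from it. -/
theorem nonneg_induction_on_support (s : Finset α) {P : (α → ℝ) → Prop} (zero : P 0)
    (step : ∀ (F : α → ℝ) (W : Finset α) (m : ℝ), (∀ x, 0 ≤ F x) → (∀ x ∉ W, F x = 0) →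
      W ⊆ s → 0 < m → P F → P (F + m • (W : Set α).indicator 1))
    {F : α → ℝ} (hF : ∀ x, 0 ≤ F x) (hFs : ∀ x ∉ s, F x = 0) : P F := by
  classical
  induction hn : #{x ∈ s | F x ≠ 0} using Nat.strong_induction_on generalizing F with
  | _ n ih =>
  set W := {x ∈ s | F x ≠ 0}
  have hFW : ∀ x ∉ W, F x = 0 := fun x hx => by
    by_contra h
    exact hx (mem_filter.2 ⟨by_contra fun hs => h (hFs x hs), h⟩)
  rcases W.eq_empty_or_nonempty with hW | hW
  · convert zero
    funext x
    exact hFW x (by simp [hW])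
  obtain ⟨x₀, hx₀, hmin⟩ := W.exists_min_image F hW
  have hm : 0 < F x₀ := (hF x₀).lt_of_ne (mem_filter.1 hx₀).2.symm
  set F' := F - F x₀ • (W : Set α).indicator 1
  have hF' : ∀ x, 0 ≤ F' x := fun x => by
    by_cases hx : x ∈ W <;> simp [F', hx, hmin, hF]
  have hF'W : ∀ x ∉ W, F' x = 0 := fun x hx => by simp [F', hx, hFW x hx]
  have hsupp : {x ∈ s | F' x ≠ 0} ⊆ W.erase x₀ := fun x hx => by
    have hx' := (mem_filter.1 hx).2
    refine mem_erase.2 ⟨?_, by_contra fun h => hx' (hF'W x h)⟩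
    rintro rfl
    simp [F', hx₀] at hx'
  have hcard : #{x ∈ s | F' x ≠ 0} < n :=
    hn ▸ (card_le_card hsupp).trans_lt (card_erase_lt_of_mem hx₀)
  have hdecomp : F = F' + F x₀ • (W : Set α).indicator 1 := by simp [F']
  rw [hdecomp]
  exact step F' W (F x₀) hF' hF'W (filter_subset _ _) hm
    (ih _ hcard hF' (fun x hx => hF'W x (fun h => hx (filter_subset _ _ h))) rfl)

theorem sum_mul_add_mul_indicator {s W : Finset α} (hWs : W ⊆ s) (c F : α → ℝ) (m : ℝ) :
    ∑ x ∈ s, c x * (F x + m * (W : Set α).indicator 1 x) =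
      ∑ x ∈ s, c x * F x + m * ∑ x ∈ W, c x := by
  rw [← sum_indicator_subset c hWs, mul_sum, ← sum_add_distrib]
  refine sum_congr rfl fun x _ => ?_
  by_cases hx : x ∈ W <;> simp [hx]
  ring

end LevelSets

section AdjacentPairs

variable {V : Type*} (G : SimpleGraph V) [DecidableRel G.Adj]

def adjPairs (T : Finset V) : Finset (V × V) := {p ∈ T ×ˢ T | G.Adj p.1 p.2}

variable {G}

theorem sum_adjPairs_swap (T : Finset V) (g : V × V → ℝ) :
    ∑ p ∈ adjPairs G T, g p.swap = ∑ p ∈ adjPairs G T, g p :=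
  sum_nbij' Prod.swap Prod.swap (by simp [adjPairs, G.adj_comm, and_comm])
    (by simp [adjPairs, G.adj_comm, and_comm]) (by simp) (by simp) (by simp)

theorem sum_adjPairs_indicator_mul {W T : Finset V} (hWT : W ⊆ T) :
    ∑ p ∈ adjPairs G T, (W : Set V).indicator 1 p.1 * (W : Set V).indicator (1 : V → ℝ) p.2 =
      edgesTwice G W := by
  have hsub : adjPairs G W ⊆ adjPairs G T := fun p hp => by
    simp only [adjPairs, mem_filter, mem_product] at hp ⊢
    exact ⟨⟨hWT hp.1.1, hWT hp.1.2⟩, hp.2⟩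
  rw [← sum_subset hsub fun p hpT hpW => ?_]
  · rw [show edgesTwice G W = #(adjPairs G W) from rfl, card_eq_sum_ones, Nat.cast_sum]
    refine sum_congr rfl fun p hp => ?_
    simp only [adjPairs, mem_filter, mem_product] at hp
    simp [hp.1.1, hp.1.2]
  · simp only [adjPairs, mem_filter, mem_product, not_and] at hpT hpW
    by_cases h : p.1 ∈ W ∧ p.2 ∈ W
    · exact absurd hpT.2 (hpW h)
    · rcases not_and_or.1 h with h | h <;> simp [h]

variable [G.LocallyFinite] {s T : Finset V}

theorem sum_adjPairs_fst (hsT : s ⊆ T) (hnb : ∀ x ∈ s, G.neighborFinset x ⊆ T) {g : V → ℝ}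
    (hg : ∀ x ∉ s, g x = 0) : ∑ p ∈ adjPairs G T, g p.1 = ∑ x ∈ s, (G.degree x : ℝ) * g x := by
  rw [adjPairs, sum_filter, sum_product, ← sum_subset hsT fun x _ hx => by simp [hg x hx]]
  refine sum_congr rfl fun x hx => ?_
  have hN : {y ∈ T | G.Adj x y} = G.neighborFinset x := by
    ext y
    simpa using fun h => hnb x hx ((G.mem_neighborFinset x y).2 h)
  rw [← sum_filter]
  dsimp only
  rw [hN, sum_const, nsmul_eq_mul, SimpleGraph.card_neighborFinset_eq_degree]

theorem sum_adjPairs_snd (hsT : s ⊆ T) (hnb : ∀ x ∈ s, G.neighborFinset x ⊆ T) {g : V → ℝ}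
    (hg : ∀ x ∉ s, g x = 0) : ∑ p ∈ adjPairs G T, g p.2 = ∑ x ∈ s, (G.degree x : ℝ) * g x := by
  rw [← sum_adjPairs_fst hsT hnb hg, ← sum_adjPairs_swap]
  rfl

theorem tsum_tsum_adj_eq_sum_adjPairs (hsT : s ⊆ T) (hnb : ∀ x ∈ s, G.neighborFinset x ⊆ T)
    {g : V → V → ℝ} (hg : ∀ x y, x ∉ s → y ∉ s → g x y = 0) :
    ∑' x, ∑' y, (if G.Adj x y then g x y else 0) = ∑ p ∈ adjPairs G T, g p.1 p.2 := by
  have hout : ∀ x y, G.Adj x y → x ∉ T → y ∉ s := fun x y hxy hx hy =>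
    hx (hnb y hy ((G.mem_neighborFinset y x).2 hxy.symm))
  have hzero : ∀ x y, G.Adj x y → (x ∉ T ∨ y ∉ T) → g x y = 0 := by
    rintro x y hxy (hx | hy)
    · exact hg x y (fun h => hx (hsT h)) (hout x y hxy hx)
    · exact hg x y (hout y x hxy.symm hy) (fun h => hy (hsT h))
  rw [adjPairs, sum_filter, sum_product]
  have hinner : ∀ x, ∑' y, (if G.Adj x y then g x y else 0) =
      ∑ y ∈ T, if G.Adj x y then g x y else 0 := fun x =>
    tsum_eq_sum fun y hy => by
      split_ifs with h
      exacts [hzero x y h (Or.inr hy), rfl]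
  rw [tsum_congr hinner]
  refine tsum_eq_sum fun x hx => sum_eq_zero fun y _ => ?_
  split_ifs with h
  exacts [hzero x y h (Or.inl hx), rfl]

theorem sum_adjPairs_add_sq (hsT : s ⊆ T) (hnb : ∀ x ∈ s, G.neighborFinset x ⊆ T) {h : V → ℝ}
    (hs : ∀ x ∉ s, h x = 0) :
    ∑ p ∈ adjPairs G T, (h p.1 + h p.2) ^ 2 =
      4 * ∑ x ∈ s, (G.degree x : ℝ) * h x ^ 2 - ∑ p ∈ adjPairs G T, (h p.1 - h p.2) ^ 2 := by
  have hs2 : ∀ x ∉ s, h x ^ 2 = 0 := fun x hx => by simp [hs x hx]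
  rw [eq_sub_iff_add_eq, ← sum_add_distrib]
  simp only [show ∀ a b : ℝ, (a + b) ^ 2 + (a - b) ^ 2 = 2 * a ^ 2 + 2 * b ^ 2 from
    fun a b => by ring, sum_add_distrib, ← mul_sum, sum_adjPairs_fst hsT hnb hs2,
    sum_adjPairs_snd hsT hnb hs2]
  ring

end AdjacentPairs

section Sparse

variable {V : Type*} [DecidableEq V] {G : SimpleGraph V} [DecidableRel G.Adj] [G.LocallyFinite]

theorem sum_degree_eq_edgesTwice_add_bdryCard (W : Finset V) :
    ∑ x ∈ W, G.degree x = edgesTwice G W + bdryCard G W := by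
  have hE : edgesTwice G W = ∑ x ∈ W, #{y ∈ G.neighborFinset x | y ∈ W} := by
    rw [edgesTwice, card_filter, sum_product]
    refine sum_congr rfl fun x _ => ?_
    rw [← card_filter]
    congr 1
    ext y
    simp [and_comm]
  rw [hE, bdryCard, ← sum_add_distrib]
  exact sum_congr rfl fun x _ => (card_filter_add_card_filter_not _).symm

theorem sum_adjPairs_abs_indicator_sub {W T : Finset V} (hWT : W ⊆ T)
    (hnb : ∀ x ∈ W, G.neighborFinset x ⊆ T) :
    ∑ p ∈ adjPairs G T, |(W : Set V).indicator 1 p.1 - (W : Set V).indicator (1 : V → ℝ) p.2| =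
      2 * bdryCard G W := by
  have hE := sum_adjPairs_indicator_mul (G := G) hWT
  set ι := (W : Set V).indicator (1 : V → ℝ)
  have hι : ∀ x ∉ W, ι x = 0 := fun x hx => by simp [ι, hx]
  have hpt : ∀ x y, |ι x - ι y| = ι x + ι y - 2 * (ι x * ι y) := fun x y => by
    by_cases hx : x ∈ W <;> by_cases hy : y ∈ W <;> norm_num [ι, hx, hy]
  have hdeg : ∑ x ∈ W, (G.degree x : ℝ) * ι x = edgesTwice G W + bdryCard G W := by
    rw [← Nat.cast_add, ← sum_degree_eq_edgesTwice_add_bdryCard, Nat.cast_sum]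
    exact sum_congr rfl fun x hx => by simp [ι, hx]
  simp only [hpt, sum_sub_distrib, sum_add_distrib, ← mul_sum, hE, sum_adjPairs_fst hWT hnb hι,
    sum_adjPairs_snd hWT hnb hι, hdeg]
  ring

variable {q : V → ℝ} {a k δ : ℝ} {s T : Finset V}

theorem IsSparse.sum_degree_add_le (hsp : IsSparse G q a k) (W : Finset V) :
    ∑ x ∈ W, ((G.degree x : ℝ) + max (q x) 0) ≤
      k * #W + (1 + a) * (bdryCard G W + ∑ x ∈ W, max (q x) 0) := by
  have hdeg := congrArg (Nat.cast (R := ℝ)) (sum_degree_eq_edgesTwice_add_bdryCard (G := G) W)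
  push_cast at hdeg
  rw [sum_add_distrib, hdeg]
  linarith [hsp W]

theorem IsSparse.sum_degree_add_mul_le (hsp : IsSparse G q a k) (hsT : s ⊆ T)
    (hnb : ∀ x ∈ s, G.neighborFinset x ⊆ T) {F : V → ℝ} (hF : ∀ x, 0 ≤ F x)
    (hFs : ∀ x ∉ s, F x = 0) :
    ∑ x ∈ s, ((G.degree x : ℝ) + max (q x) 0) * F x ≤
      k * ∑ x ∈ s, F x + (1 + a) * ((∑ p ∈ adjPairs G T, |F p.1 - F p.2|) / 2 +
        ∑ x ∈ s, max (q x) 0 * F x) := by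
  refine nonneg_induction_on_support s
    (P := fun F => ∑ x ∈ s, ((G.degree x : ℝ) + max (q x) 0) * F x ≤
      k * ∑ x ∈ s, F x + (1 + a) * ((∑ p ∈ adjPairs G T, |F p.1 - F p.2|) / 2 +
        ∑ x ∈ s, max (q x) 0 * F x)) (by simp) ?_ hF hFs
  intro F W m hF hFW hWs hm ih
  have hsum : ∑ x ∈ s, (F x + m * (W : Set V).indicator 1 x) = ∑ x ∈ s, F x + m * #W := by
    simpa using sum_mul_add_mul_indicator hWs 1 F m
  have habs : ∑ p ∈ adjPairs G T, |F p.1 + m * (W : Set V).indicator 1 p.1 -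
      (F p.2 + m * (W : Set V).indicator 1 p.2)| =
      ∑ p ∈ adjPairs G T, |F p.1 - F p.2| + m * (2 * bdryCard G W) := by
    simp only [abs_add_mul_indicator_sub hF hFW hm.le, sum_add_distrib, ← mul_sum,
      sum_adjPairs_abs_indicator_sub (hWs.trans hsT) fun x hx => hnb x (hWs hx)]
  simp only [Pi.add_apply, Pi.smul_apply, smul_eq_mul, sum_mul_add_mul_indicator hWs, hsum, habs]
  linear_combination ih + mul_le_mul_of_nonneg_left (hsp.sum_degree_add_le W) hm.le

theorem IsSparse.sum_degree_sub_le (hsp : IsSparse G q (δ ^ 2) k) (hδ : 0 < δ) (hδ' : δ ≤ 1 / 2)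
    (hk : 0 ≤ k) (hsT : s ⊆ T) (hnb : ∀ x ∈ s, G.neighborFinset x ⊆ T) {h : V → ℝ}
    (h0 : ∀ x, 0 ≤ h x) (hs : ∀ x ∉ s, h x = 0) :
    ∑ x ∈ s, (G.degree x : ℝ) * h x ^ 2 - (∑ p ∈ adjPairs G T, (h p.1 - h p.2) ^ 2) / 2 ≤
      9 * δ * (∑ x ∈ s, (G.degree x : ℝ) * h x ^ 2 + ∑ x ∈ s, max (q x) 0 * h x ^ 2) +
        3 * k / δ * ∑ x ∈ s, h x ^ 2 := by
  set D := ∑ x ∈ s, (G.degree x : ℝ) * h x ^ 2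
  set P := ∑ x ∈ s, max (q x) 0 * h x ^ 2
  set N := ∑ x ∈ s, h x ^ 2
  set Λ := ∑ p ∈ adjPairs G T, (h p.1 - h p.2) ^ 2
  set S := ∑ p ∈ adjPairs G T, |h p.1 ^ 2 - h p.2 ^ 2|
  have hlayer : D + P ≤ k * N + (1 + δ ^ 2) * (S / 2 + P) := by
    have := hsp.sum_degree_add_mul_le hsT hnb (F := fun x => h x ^ 2) (fun x => sq_nonneg _)
      (fun x hx => by simp [hs x hx])
    simpa only [add_mul, sum_add_distrib] using this
  have hsum := sum_adjPairs_add_sq hsT hnb hs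
  have hamgm : 2 * (1 + δ) * S ≤ (1 + δ) ^ 2 * Λ + (4 * D - Λ) := by
    rw [← hsum, mul_sum, mul_sum, ← sum_add_distrib]
    exact sum_le_sum fun p _ => two_mul_abs_sq_sub_sq_le (h0 _) (h0 _) _
  have hΛ : Λ ≤ 4 * D := by
    linarith [sum_nonneg fun p (_ : p ∈ adjPairs G T) => sq_nonneg (h p.1 + h p.2)]
  have hN : 0 ≤ N := sum_nonneg fun x _ => sq_nonneg _
  have hP : 0 ≤ P := sum_nonneg fun x _ => mul_nonneg (le_max_right _ _) (sq_nonneg _)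
  have hD : 0 ≤ D := sum_nonneg fun x _ => mul_nonneg (Nat.cast_nonneg _) (sq_nonneg _)
  refine le_of_mul_le_mul_left ?_ hδ
  calc δ * (D - Λ / 2)
      ≤ (1 + δ) * k * N + δ ^ 2 * (1 + δ) ^ 2 * Λ / 4 + δ ^ 2 * D + (1 + δ) * δ ^ 2 * P := by
        linear_combination mul_le_mul_of_nonneg_left hlayer (by positivity : (0 : ℝ) ≤ 1 + δ) +
          mul_le_mul_of_nonneg_left hamgm (by positivity : (0 : ℝ) ≤ (1 + δ ^ 2) / 4)
    _ ≤ 9 * δ ^ 2 * (D + P) + 3 * k * N := by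
        nlinarith [mul_le_mul_of_nonneg_left hΛ (by positivity : (0 : ℝ) ≤ δ ^ 2 * (1 + δ) ^ 2),
          mul_nonneg (by linarith : (0 : ℝ) ≤ 2 - δ) (mul_nonneg hk hN),
          mul_nonneg (by nlinarith : (0 : ℝ) ≤ 8 - (1 + δ) ^ 2) (mul_nonneg (sq_nonneg δ) hD),
          mul_nonneg (by linarith : (0 : ℝ) ≤ 8 - δ) (mul_nonneg (sq_nonneg δ) hP)]
    _ = δ * (9 * δ * (D + P) + 3 * k / δ * N) := by field_simp

end Sparse

section Forms

variable {V : Type*} {s : Finset V} {f : V → ℂ}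

theorem qPot_eq_sum (hf : ∀ x ∉ s, f x = 0) (p : V → ℝ) :
    qPot p f = ∑ x ∈ s, p x * ‖f x‖ ^ 2 :=
  tsum_eq_sum fun x hx => by simp [hf x hx]

theorem qNormSq_eq_sum (hf : ∀ x ∉ s, f x = 0) : qNormSq f = ∑ x ∈ s, ‖f x‖ ^ 2 :=
  tsum_eq_sum fun x hx => by simp [hf x hx]

theorem qPot_nonneg {p : V → ℝ} (hp : ∀ x, 0 ≤ p x) (f : V → ℂ) : 0 ≤ qPot p f :=
  tsum_nonneg fun x => mul_nonneg (hp x) (sq_nonneg _)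

theorem qPot_eq_sub (hf : (Function.support f).Finite) (p : V → ℝ) :
    qPot p f = qPot (fun x => max (p x) 0) f - qPot (fun x => max (-p x) 0) f := by
  have hfs : ∀ x ∉ hf.toFinset, f x = 0 := by simp
  simp only [qPot_eq_sum hfs, ← sum_sub_distrib, ← sub_mul, max_zero_sub_max_neg_zero_eq_self]

variable {G : SimpleGraph V} [G.LocallyFinite]

theorem qDeg_eq_sum (hf : ∀ x ∉ s, f x = 0) :
    qDeg G f = ∑ x ∈ s, (G.degree x : ℝ) * ‖f x‖ ^ 2 :=
  qPot_eq_sum hf _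

theorem exists_superset_neighborFinset [DecidableEq V] (s : Finset V) :
    ∃ T : Finset V, s ⊆ T ∧ ∀ x ∈ s, G.neighborFinset x ⊆ T :=
  ⟨s ∪ s.biUnion (G.neighborFinset ·), subset_union_left,
    fun _ hx => (subset_biUnion_of_mem (G.neighborFinset ·) hx).trans subset_union_right⟩

variable [DecidableRel G.Adj] {T : Finset V}

theorem qLap_eq_sum_adjPairs (hf : ∀ x ∉ s, f x = 0) (hsT : s ⊆ T)
    (hnb : ∀ x ∈ s, G.neighborFinset x ⊆ T) :
    qLap G f = (∑ p ∈ adjPairs G T, ‖f p.1 - f p.2‖ ^ 2) / 2 := by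
  rw [qLap, tsum_tsum_adj_eq_sum_adjPairs hsT hnb fun x y hx hy => by simp [hf x hx, hf y hy]]
  ring

theorem qLap_le_two_mul_qDeg [DecidableEq V] (hf : (Function.support f).Finite) :
    qLap G f ≤ 2 * qDeg G f := by
  have hfs : ∀ x ∉ hf.toFinset, f x = 0 := by simp
  obtain ⟨T, hsT, hnb⟩ := exists_superset_neighborFinset (G := G) hf.toFinset
  have hs2 : ∀ x ∉ hf.toFinset, ‖f x‖ ^ 2 = 0 := fun x hx => by simp [hfs x hx]
  have hpt : ∀ a b : ℂ, ‖a - b‖ ^ 2 ≤ 2 * ‖a‖ ^ 2 + 2 * ‖b‖ ^ 2 := fun a b => by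
    nlinarith [norm_sub_le a b, norm_nonneg (a - b), sq_nonneg (‖a‖ - ‖b‖)]
  have := sum_le_sum fun p (_ : p ∈ adjPairs G T) => hpt (f p.1) (f p.2)
  rw [sum_add_distrib, ← mul_sum, ← mul_sum, sum_adjPairs_fst hsT hnb hs2,
    sum_adjPairs_snd hsT hnb hs2] at this
  rw [qLap_eq_sum_adjPairs hfs hsT hnb, qDeg_eq_sum hfs]
  linarith

end Forms

section Comparison

variable {V : Type*} [DecidableEq V] {G : SimpleGraph V} [DecidableRel G.Adj] [G.LocallyFinite]
  {q : V → ℝ} {δ k : ℝ}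

theorem IsSparse.abs_qLap_sub_qDeg_le (hsp : IsSparse G q (δ ^ 2) k) (hδ : 0 < δ)
    (hδ' : δ ≤ 1 / 2) (hk : 0 ≤ k) {f : V → ℂ} (hf : (Function.support f).Finite) :
    |qLap G f - qDeg G f| ≤
      9 * δ * (qDeg G f + qPot (fun x => max (q x) 0) f) + 3 * k / δ * qNormSq f := by
  have hfs : ∀ x ∉ hf.toFinset, f x = 0 := by simp
  obtain ⟨T, hsT, hnb⟩ := exists_superset_neighborFinset (G := G) hf.toFinset
  have key := hsp.sum_degree_sub_le hδ hδ' hk hsT hnb (h := fun x => ‖f x‖)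
    (fun _ => norm_nonneg _) fun x hx => by simp [hfs x hx]
  have hsum := sum_adjPairs_add_sq hsT hnb (h := fun x => ‖f x‖) (fun x hx => by simp [hfs x hx])
  have hlow : ∑ p ∈ adjPairs G T, (‖f p.1‖ - ‖f p.2‖) ^ 2 ≤
      ∑ p ∈ adjPairs G T, ‖f p.1 - f p.2‖ ^ 2 :=
    sum_le_sum fun p _ => sq_le_sq' (abs_le.1 (abs_norm_sub_norm_le _ _)).1
      (abs_le.1 (abs_norm_sub_norm_le _ _)).2
  have hup : ∑ p ∈ adjPairs G T, ‖f p.1 - f p.2‖ ^ 2 ≤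
      ∑ p ∈ adjPairs G T, (‖f p.1‖ + ‖f p.2‖) ^ 2 :=
    sum_le_sum fun p _ => pow_le_pow_left₀ (norm_nonneg _) (norm_sub_le _ _) 2
  rw [qLap_eq_sum_adjPairs hfs hsT hnb, qDeg_eq_sum hfs, qPot_eq_sum hfs, qNormSq_eq_sum hfs,
    abs_le]
  constructor <;> linarith

end Comparison

section Indicator

variable {V : Type*} (W : Finset V)

theorem qPot_indicator (p : V → ℝ) : qPot p ((W : Set V).indicator 1) = ∑ x ∈ W, p x := by
  rw [qPot_eq_sum (s := W) fun x hx => by simp [hx]]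
  exact sum_congr rfl fun x hx => by simp [hx]

theorem qNormSq_indicator : qNormSq ((W : Set V).indicator (1 : V → ℂ)) = #W := by
  rw [qNormSq_eq_sum (s := W) fun x hx => by simp [hx], card_eq_sum_ones, Nat.cast_sum]
  exact sum_congr rfl fun x hx => by simp [hx]

variable {G : SimpleGraph V} [G.LocallyFinite]

theorem qDeg_indicator : qDeg G ((W : Set V).indicator 1) = ∑ x ∈ W, (G.degree x : ℝ) :=
  qPot_indicator W _

variable [DecidableEq V] [DecidableRel G.Adj]

theorem qLap_indicator : qLap G ((W : Set V).indicator 1) = bdryCard G W := by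
  obtain ⟨T, hWT, hnb⟩ := exists_superset_neighborFinset (G := G) W
  rw [qLap_eq_sum_adjPairs (fun x hx => by simp [hx]) hWT hnb, div_eq_iff two_ne_zero,
    mul_comm, ← sum_adjPairs_abs_indicator_sub hWT hnb]
  refine sum_congr rfl fun p _ => ?_
  by_cases h1 : p.1 ∈ W <;> by_cases h2 : p.2 ∈ W <;> simp [h1, h2]

end Indicator

section Equivalence

variable {V : Type*} (G : SimpleGraph V) [DecidableRel G.Adj] [G.LocallyFinite] (q : V → ℝ)

def FormBoundedBelow : Prop :=
  ∀ ε : ℝ, 0 < ε → ∃ kε : ℝ, 0 ≤ kε ∧ ∀ f : V → ℂ, (Function.support f).Finite →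
    (1 - ε) * (qDeg G f + qPot q f) - kε * qNormSq f ≤ qLap G f + qPot q f

def FormComparable : Prop :=
  ∀ ε : ℝ, 0 < ε → ∃ kε : ℝ, 0 ≤ kε ∧ ∀ f : V → ℂ, (Function.support f).Finite →
    (1 - ε) * (qDeg G f + qPot q f) - kε * qNormSq f ≤ qLap G f + qPot q f ∧
    qLap G f + qPot q f ≤ (1 + ε) * (qDeg G f + qPot q f) + kε * qNormSq f

def AlmostSparse [DecidableEq V] : Prop :=
  ∀ ε : ℝ, 0 < ε → ∃ kε : ℝ, 0 ≤ kε ∧ IsSparse G q ε kε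

variable {G q}

theorem FormComparable.formBoundedBelow (h : FormComparable G q) : FormBoundedBelow G q :=
  fun ε hε => (h ε hε).imp fun _ ⟨hk, hf⟩ => ⟨hk, fun f hfin => (hf f hfin).1⟩

variable [DecidableEq V]

theorem FormBoundedBelow.almostSparse (h : FormBoundedBelow G q) : AlmostSparse G q := by
  intro ε hε
  obtain ⟨k, hk, hlow⟩ := h (ε / (1 + ε)) (by positivity)
  refine ⟨(1 + ε) * k, by positivity, fun W => ?_⟩
  have hW := hlow ((W : Set V).indicator 1) (W.finite_toSet.subset Set.support_indicator_subset)
  rw [qLap_indicator, qDeg_indicator, qPot_indicator, qNormSq_indicator] at hW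
  have hdeg := congrArg (Nat.cast (R := ℝ)) (sum_degree_eq_edgesTwice_add_bdryCard (G := G) W)
  push_cast at hdeg
  have hq : ∑ x ∈ W, q x ≤ ∑ x ∈ W, max (q x) 0 := sum_le_sum fun x _ => le_max_left _ _
  have hε' : (1 - ε / (1 + ε)) * (1 + ε) = 1 := by field_simp; ring
  linear_combination mul_le_mul_of_nonneg_left hW (by positivity : (0 : ℝ) ≤ 1 + ε) +
    -(∑ x ∈ W, (G.degree x : ℝ) + ∑ x ∈ W, q x) * hε' - hdeg + mul_le_mul_of_nonneg_left hq hε.le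

theorem AlmostSparse.formComparable (hq : ∀ α : ℝ, 0 < α → α < 1 → KClass G q α)
    (h : AlmostSparse G q) : FormComparable G q := by
  intro ε hε
  set δ := min (1 / 2) (ε / 18)
  have hδ : 0 < δ := lt_min (by norm_num) (by positivity)
  obtain ⟨k, hk, hsp⟩ := h (δ ^ 2) (by positivity)
  obtain ⟨C, hC, hKC⟩ := hq (1 / 4) (by norm_num) (by norm_num)
  refine ⟨3 * k / δ + ε * C, by positivity, fun f hf => ?_⟩
  have hcmp := abs_le.1 (hsp.abs_qLap_sub_qDeg_le hδ (min_le_left _ _) hk hf)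
  have hη : 9 * δ * (qDeg G f + qPot (fun x => max (q x) 0) f) ≤
      ε / 2 * (qDeg G f + qPot (fun x => max (q x) 0) f) :=
    mul_le_mul_of_nonneg_right (by linarith [min_le_right (1 / 2) (ε / 18)])
      (add_nonneg (qPot_nonneg (fun x => Nat.cast_nonneg _) f)
        (qPot_nonneg (fun x => le_max_right _ _) f))
  have hM := mul_le_mul_of_nonneg_left (hKC f hf) hε.le
  have hL := mul_le_mul_of_nonneg_left (qLap_le_two_mul_qDeg (G := G) hf) hε.le
  have hP := mul_nonneg hε.le (qPot_nonneg (fun x => le_max_right (q x) 0) f)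
  rw [qPot_eq_sub hf q]
  constructor <;> linarith

end Equivalence

section

variable {V : Type*} [DecidableEq V] (G : SimpleGraph V) [DecidableRel G.Adj] [G.LocallyFinite]

theorem stmt7 (q : V → ℝ)
    (hq : ∀ α : ℝ, 0 < α → α < 1 → KClass G q α) :
    ((∀ ε : ℝ, 0 < ε → ∃ kε : ℝ, 0 ≤ kε ∧ IsSparse G q ε kε) ↔
      (∀ ε : ℝ, 0 < ε → ∃ kε : ℝ, 0 ≤ kε ∧
        ∀ f : V → ℂ, (Function.support f).Finite →
          (1 - ε) * (qDeg G f + qPot q f) - kε * qNormSq f ≤ qLap G f + qPot q f ∧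
          qLap G f + qPot q f ≤ (1 + ε) * (qDeg G f + qPot q f) + kε * qNormSq f)) ∧
    ((∀ ε : ℝ, 0 < ε → ∃ kε : ℝ, 0 ≤ kε ∧
        ∀ f : V → ℂ, (Function.support f).Finite →
          (1 - ε) * (qDeg G f + qPot q f) - kε * qNormSq f ≤ qLap G f + qPot q f ∧
          qLap G f + qPot q f ≤ (1 + ε) * (qDeg G f + qPot q f) + kε * qNormSq f) ↔
      (∀ ε : ℝ, 0 < ε → ∃ kε : ℝ, 0 ≤ kε ∧
        ∀ f : V → ℂ, (Function.support f).Finite →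
          (1 - ε) * (qDeg G f + qPot q f) - kε * qNormSq f ≤ qLap G f + qPot q f)) :=
  ⟨⟨AlmostSparse.formComparable hq,
      fun h => FormBoundedBelow.almostSparse (FormComparable.formBoundedBelow h)⟩,
    ⟨FormComparable.formBoundedBelow,
      fun h => AlmostSparse.formComparable hq (FormBoundedBelow.almostSparse h)⟩⟩

end
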